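/- Let u ≥ v ≥ 2 be integers, M = [[a,b],[c,d]] ∈ SL₂(ℕ₀) with a ≥ c, and n a natural number. Suppose M' = W·M where W is a product of exactly 2n+1 matrices each equal to L_u or R_v, and write M' = [[a',b'],[c',d']]. Then max{a', c'} ≤ γ_n and a' + c' ≤ α_n + γ_n, where α_n and γ_n are defined from the initial values a and c. -/

import Mathlib

open Matrix Finset

def Lm (u : ℕ) : Matrix (Fin 2) (Fin 2) ℕ := !![1, 0; u, 1]
def Rm (v : ℕ) : Matrix (Fin 2) (Fin 2) ℕ := !![1, v; 0, 1]

/-- The product of the matrices corresponding to a word: `false ↦ L_u`, `true ↦ R_v`. -/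
def wordProd (u v : ℕ) (w : List Bool) : Matrix (Fin 2) (Fin 2) ℕ :=
  (w.map (fun b => if b then Rm v else Lm u)).prod

/-- μ of a matrix: maximum of the four entries. -/
def matMax (M : Matrix (Fin 2) (Fin 2) ℕ) : ℕ :=
  max (max (M 0 0) (M 0 1)) (max (M 1 0) (M 1 1))

/-- μ(𝒯^{(u,v)}(I₂;n)): maximum of μ over all products of exactly n matrices each L_u or R_v. -/
def levelMax (u v n : ℕ) : ℕ :=
  Finset.univ.sup (fun w : Fin n → Bool => matMax (wordProd u v (List.ofFn w)))
/-- The pair (α_n, γ_n) defined by α_0 = a, γ_0 = u·a + c, and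
    α_n = α_{n-1} + v·γ_{n-1}, γ_n = u·α_{n-1} + (1+uv)·γ_{n-1}. -/
def ag (u v a c : ℕ) : ℕ → ℕ × ℕ
  | 0 => (a, u * a + c)
  | n + 1 =>
      ((ag u v a c n).1 + v * (ag u v a c n).2,
       u * (ag u v a c n).1 + (1 + u * v) * (ag u v a c n).2)

/-- Membership in SL₂(ℕ₀): natural-number entries with determinant 1. -/
def detOne (M : Matrix (Fin 2) (Fin 2) ℕ) : Prop :=
  M 0 0 * M 1 1 = M 0 1 * M 1 0 + 1

/-!
Act on the first column `(a, c)`. Since `u, v ≥ 2`, applying the same letter twice in a row is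
never better than switching letters: the two resulting columns satisfy a cross comparison
(`CrossLE`) that propagates along the two opposite alternating words. Hence every word of a given
length is dominated, both in the maximum and in the sum of the column entries, by one of the two
alternating words. The alternating word applying `L_u` first produces exactly `(α_n, γ_n)`; when
`a ≥ c` and `u ≥ v` it also dominates the one applying `R_v` first, which is
`R_v (α_m(a + vc, c), γ_m(a + vc, c))` for `n = m + 1`.
-/

section ColumnAction

variable (u v : ℕ)

def colStep : Bool → ℕ × ℕ → ℕ × ℕ
  | false, p => (p.1, u * p.1 + p.2)
  | true, p => (p.1 + v * p.2, p.2)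

def colAct (w : List Bool) (p : ℕ × ℕ) : ℕ × ℕ := w.foldr (colStep u v) p

def altAct : Bool → ℕ → ℕ × ℕ → ℕ × ℕ
  | _, 0, p => p
  | b, m + 1, p => altAct (!b) m (colStep u v b p)

def CrossLE (p q : ℕ × ℕ) : Prop :=
  p.1 ≤ q.2 ∧ p.2 ≤ q.1 ∧ u * p.1 ≤ v * q.2 ∧ v * p.2 ≤ u * q.1

variable {u v}

theorem CrossLE.colStep_not {p q : ℕ × ℕ} (h : CrossLE u v p q) (b : Bool) :
    CrossLE u v (colStep u v b p) (colStep u v (!b) q) := by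
  obtain ⟨h1, h2, h3, h4⟩ := h
  cases b <;> refine ⟨?_, ?_, ?_, ?_⟩ <;> simp only [colStep, Bool.not_false, Bool.not_true] <;>
    nlinarith [Nat.mul_le_mul_left (u * v) h1, Nat.mul_le_mul_left (u * v) h2]

theorem crossLE_colStep_colStep (hu : 2 ≤ u) (hv : 2 ≤ v) (b : Bool) (p : ℕ × ℕ) :
    CrossLE u v (colStep u v b (colStep u v b p)) (colStep u v (!b) (colStep u v b p)) := by
  cases b <;> refine ⟨?_, ?_, ?_, ?_⟩ <;> simp only [colStep, Bool.not_false, Bool.not_true] <;>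
    nlinarith [Nat.mul_le_mul_right (u * v * p.1) hu, Nat.mul_le_mul_right (u * v * p.2) hv,
      Nat.mul_le_mul_right p.1 hu, Nat.mul_le_mul_right p.2 hv]

variable {f : ℕ × ℕ → ℕ}

theorem altAct_le_of_crossLE (hf : Monotone f) (hswap : ∀ p, f p.swap = f p) :
    ∀ (m : ℕ) (b : Bool) {p q : ℕ × ℕ}, CrossLE u v p q →
      f (altAct u v b m p) ≤ f (altAct u v (!b) m q)
  | 0, _, _, q, h => (hf (show _ ≤ q.swap from ⟨h.1, h.2.1⟩)).trans_eq (hswap q)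
  | m + 1, b, _, _, h => by
      simpa only [altAct, Bool.not_not] using
        altAct_le_of_crossLE hf hswap m (!b) (h.colStep_not b)

theorem altAct_repeat_le (hu : 2 ≤ u) (hv : 2 ≤ v) (hf : Monotone f)
    (hswap : ∀ p, f p.swap = f p) (b : Bool) (m : ℕ) (p : ℕ × ℕ) :
    f (altAct u v b m (colStep u v b p)) ≤ f (altAct u v (!b) m (colStep u v b p)) := by
  cases m with
  | zero => exact le_rfl
  | succ m =>
      simpa only [altAct, Bool.not_not] using
        altAct_le_of_crossLE hf hswap m (!b) (crossLE_colStep_colStep hu hv b p)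

theorem colAct_le_max_altAct (hu : 2 ≤ u) (hv : 2 ≤ v) (hf : Monotone f)
    (hswap : ∀ p, f p.swap = f p) (w : List Bool) (p : ℕ × ℕ) :
    f (colAct u v w p) ≤
      max (f (altAct u v false w.length p)) (f (altAct u v true w.length p)) := by
  induction w using List.reverseRecOn generalizing p with
  | nil => exact le_max_left _ _
  | append_singleton t b ih =>
      have hrep := altAct_repeat_le hu hv hf hswap b t.length p
      have hswitch : f (colAct u v t (colStep u v b p)) ≤ f (altAct u v b (t.length + 1) p) := by
        refine (ih _).trans ?_
        cases b
        · exact max_le hrep le_rfl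
        · exact max_le le_rfl hrep
      rw [colAct, List.foldr_append, List.length_append, List.length_singleton]
      cases b
      · exact hswitch.trans (le_max_left _ _)
      · exact hswitch.trans (le_max_right _ _)

end ColumnAction

theorem wordProd_mul_col (u v : ℕ) (M : Matrix (Fin 2) (Fin 2) ℕ) (w : List Bool) :
    ((wordProd u v w * M) 0 0, (wordProd u v w * M) 1 0) = colAct u v w (M 0 0, M 1 0) := by
  induction w with
  | nil => simp [wordProd, colAct]
  | cons b w ih =>
      have hcons : wordProd u v (b :: w) = (if b then Rm v else Lm u) * wordProd u v w := by
        simp [wordProd]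
      rw [colAct, List.foldr_cons, ← colAct, ← ih, hcons, Matrix.mul_assoc]
      cases b <;> simp [Lm, Rm, colStep, Matrix.mul_apply, Fin.sum_univ_two]

section Alternation

variable {u v : ℕ}

theorem ag_succ (a c n : ℕ) :
    ag u v a c (n + 1) = ag u v (a + v * (u * a + c)) (u * a + c) n := by
  induction n with
  | zero => simp only [ag, Prod.mk.injEq, true_and]; ring
  | succ n ih => rw [ag, ih]; rfl

theorem altAct_false_odd (n : ℕ) (p : ℕ × ℕ) :
    altAct u v false (2 * n + 1) p = ag u v p.1 p.2 n := by
  induction n generalizing p with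
  | zero => rfl
  | succ n ih => rw [ag_succ]; exact ih _

theorem altAct_false_even (n : ℕ) (p : ℕ × ℕ) :
    altAct u v false (2 * n + 2) p = colStep u v true (ag u v p.1 p.2 n) := by
  induction n generalizing p with
  | zero => rfl
  | succ n ih => rw [ag_succ]; exact ih _

theorem ag_fst_le_snd (hu : 1 ≤ u) (a c n : ℕ) : (ag u v a c n).1 ≤ (ag u v a c n).2 := by
  cases n with
  | zero => exact le_add_right (Nat.le_mul_of_pos_left a hu)
  | succ n =>
      simp only [ag]
      nlinarith [Nat.le_mul_of_pos_left (ag u v a c n).1 hu, Nat.zero_le (u * v * (ag u v a c n).2)]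

/-- The four slacks evolve under the recurrence of `ag` by a matrix with nonnegative entries. -/
theorem ag_add_mul_le (hv : 1 ≤ v) (huv : v ≤ u) {a c : ℕ} (hca : c ≤ a) (k : ℕ) :
    (ag u v (a + v * c) c k).1 ≤ (ag u v a c k).2 ∧
    v * (ag u v (a + v * c) c k).2 ≤ u * (ag u v a c k).1 + u * v * (ag u v a c k).2 ∧
    (ag u v (a + v * c) c k).1 + (v + 1) * (ag u v (a + v * c) c k).2 ≤
      (u + 1) * (ag u v a c k).1 + (u * v + v + 1) * (ag u v a c k).2 ∧
    u * (ag u v (a + v * c) c k).1 + v * (ag u v (a + v * c) c k).2 ≤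
      u * (ag u v a c k).1 + (u * v + v) * (ag u v a c k).2 := by
  induction k with
  | zero =>
      simp only [ag]
      have hvc : v * c ≤ u * a := Nat.mul_le_mul huv hca
      refine ⟨?_, ?_, ?_, ?_⟩ <;>
        nlinarith [Nat.mul_le_mul_left (u * v) hvc, Nat.mul_le_mul_left u hvc,
          Nat.mul_le_mul_right a hv, Nat.mul_le_mul_right c hv]
  | succ k ih =>
      obtain ⟨h1, h2, h3, h4⟩ := ih
      simp only [ag]
      refine ⟨?_, ?_, ?_, ?_⟩
      · linarith
      · linarith [Nat.mul_le_mul_left (u * v) h1, Nat.mul_le_mul_left (1 + u * v) h2]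
      · linarith [Nat.mul_le_mul_left (1 + u * v) h3]
      · linarith [Nat.mul_le_mul_left (u * v) h3]

theorem altAct_true_odd_le (hv : 1 ≤ v) (huv : v ≤ u) {a c : ℕ} (hca : c ≤ a) (n : ℕ) :
    max (altAct u v true (2 * n + 1) (a, c)).1 (altAct u v true (2 * n + 1) (a, c)).2 ≤
      (ag u v a c n).2 ∧
    (altAct u v true (2 * n + 1) (a, c)).1 + (altAct u v true (2 * n + 1) (a, c)).2 ≤
      (ag u v a c n).1 + (ag u v a c n).2 := by
  cases n with
  | zero =>
      obtain ⟨h1, -⟩ := ag_add_mul_le hv huv hca 0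
      have hvc : v * c ≤ u * a := Nat.mul_le_mul huv hca
      exact ⟨max_le h1 (le_add_left le_rfl), by simp only [altAct, colStep, ag]; omega⟩
  | succ m =>
      have hR : altAct u v true (2 * (m + 1) + 1) (a, c) =
          colStep u v true (ag u v (a + v * c) c m) := altAct_false_even m _
      obtain ⟨h1, h2, h3, -⟩ := ag_add_mul_le hv huv hca m
      have hG : (ag u v (a + v * c) c m).2 ≤ v * (ag u v (a + v * c) c m).2 :=
        Nat.le_mul_of_pos_left _ hv
      rw [hR]
      simp only [colStep, ag]
      constructor
      · apply max_le <;> nlinarith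
      · nlinarith

end Alternation

theorem stmt8_general (u v : ℕ) (hv : 2 ≤ v) (huv : v ≤ u)
    (M : Matrix (Fin 2) (Fin 2) ℕ) (hac : M 1 0 ≤ M 0 0)
    (n : ℕ) (w : List Bool) (hw : w.length = 2 * n + 1)
    (M' : Matrix (Fin 2) (Fin 2) ℕ) (hM' : M' = wordProd u v w * M) :
    max (M' 0 0) (M' 1 0) ≤ (ag u v (M 0 0) (M 1 0) n).2 ∧
    M' 0 0 + M' 1 0 ≤ (ag u v (M 0 0) (M 1 0) n).1 + (ag u v (M 0 0) (M 1 0) n).2 := by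
  have hu : 2 ≤ u := hv.trans huv
  have hcol : (M' 0 0, M' 1 0) = colAct u v w (M 0 0, M 1 0) := hM' ▸ wordProd_mul_col u v M w
  have hmax := colAct_le_max_altAct hu hv (f := fun p => max p.1 p.2)
    (fun _ _ h => max_le_max h.1 h.2) (fun _ => max_comm _ _) w (M 0 0, M 1 0)
  have hsum := colAct_le_max_altAct hu hv (f := fun p => p.1 + p.2)
    (fun _ _ h => add_le_add h.1 h.2) (fun _ => add_comm _ _) w (M 0 0, M 1 0)
  rw [← hcol, hw, altAct_false_odd] at hmax hsum
  obtain ⟨hRmax, hRsum⟩ := altAct_true_odd_le (one_le_two.trans hv) huv hac n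
  exact ⟨hmax.trans (max_le (max_le (ag_fst_le_snd (one_le_two.trans hu) _ _ n) le_rfl) hRmax),
    hsum.trans (max_le le_rfl hRsum)⟩

theorem stmt8 (u v : ℕ) (hv : 2 ≤ v) (huv : v ≤ u)
    (M : Matrix (Fin 2) (Fin 2) ℕ) (hM : detOne M) (hac : M 1 0 ≤ M 0 0)
    (n : ℕ) (w : List Bool) (hw : w.length = 2 * n + 1)
    (M' : Matrix (Fin 2) (Fin 2) ℕ) (hM' : M' = wordProd u v w * M) :
    max (M' 0 0) (M' 1 0) ≤ (ag u v (M 0 0) (M 1 0) n).2 ∧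
    M' 0 0 + M' 1 0 ≤ (ag u v (M 0 0) (M 1 0) n).1 + (ag u v (M 0 0) (M 1 0) n).2 :=
  stmt8_general u v hv huv M hac n w hw M' hM'
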